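/- Alexander trick: the group Homeo(Dⁿ, ∂Dⁿ) of homeomorphisms of the closed n-disk that restrict to the identity on the boundary, equipped with the compact-open topology, is contractible; in fact there is an explicit contraction given by H(f, t)(x) = t·f(x/t) for |x| ≤ t and H(f,t)(x) = x for t ≤ |x| ≤ 1. -/

import Mathlib

noncomputable section

open Metric unitInterval

variable (n : ℕ)

/-- The closed unit disk `Dⁿ ⊆ ℝⁿ`. -/
abbrev Dn := (closedBall (0 : EuclideanSpace ℝ (Fin n)) 1 : Set (EuclideanSpace ℝ (Fin n)))

/-- The compact-open topology on self-homeomorphisms of the disk. -/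
instance : TopologicalSpace (Dn n ≃ₜ Dn n) :=
  TopologicalSpace.induced (fun f => (⟨f, f.continuous⟩ : C(Dn n, Dn n)))
    ContinuousMap.compactOpen

/-- The group `Homeo(Dⁿ, ∂Dⁿ)` of homeomorphisms of the closed disk restricting to the
identity on the boundary sphere, with the compact-open topology. -/
def HomeoRelBoundary : Type :=
  {f : Dn n ≃ₜ Dn n // ∀ x : Dn n, ‖(x : EuclideanSpace ℝ (Fin n))‖ = 1 → f x = x}

instance : TopologicalSpace (HomeoRelBoundary n) := by
  unfold HomeoRelBoundary; infer_instance

/-- The identity element of `Homeo(Dⁿ, ∂Dⁿ)`. -/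
def homeoRelBoundaryId : HomeoRelBoundary n :=
  ⟨Homeomorph.refl _, fun _ _ => rfl⟩

/-! `H(f, t)` is `f` conjugated by the dilation `x ↦ t • x`, extended by the identity outside the
ball of radius `t`; this is well defined because `f` fixes the unit sphere, and `H(f⁻¹, t)` is its
inverse. Replacing `t` by `max t ‖x‖` turns the two cases into one formula, whose norm is at most
`max t ‖x‖`: that bound gives continuity where `t` and `x` both vanish, and elsewhere continuity
follows from joint continuity of evaluation `C(Dⁿ, Dⁿ) × Dⁿ → Dⁿ`, as `Dⁿ` is compact. -/

section AlexanderTrick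

variable {E : Type*} [NormedAddCommGroup E]

local notation "𝔹" => closedBall (0 : E) 1

def FixesUnitSphere (f : 𝔹 → 𝔹) : Prop :=
  ∀ x : 𝔹, ‖(x : E)‖ = 1 → f x = x

theorem FixesUnitSphere.of_leftInverse {f g : 𝔹 → 𝔹} (hgf : Function.LeftInverse g f)
    (hf : FixesUnitSphere f) : FixesUnitSphere g := fun x hx =>
  (congrArg g (hf x hx)).symm.trans (hgf x)

variable [NormedSpace ℝ E]

theorem norm_inv_max_smul_le_one (t : ℝ) (x : E) : ‖(max t ‖x‖)⁻¹ • x‖ ≤ 1 := by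
  rcases (norm_nonneg x).eq_or_lt with hx | hx
  · simp [norm_eq_zero.mp hx.symm]
  · have hs : 0 < max t ‖x‖ := hx.trans_le (le_max_right _ _)
    rw [norm_smul, Real.norm_of_nonneg (inv_nonneg.2 hs.le), inv_mul_le_one₀ hs]
    exact le_max_right _ _

def radialRescale (t : ℝ) (x : 𝔹) : 𝔹 :=
  ⟨(max t ‖(x : E)‖)⁻¹ • (x : E),
    mem_closedBall_zero_iff.2 (norm_inv_max_smul_le_one t (x : E))⟩

theorem coe_radialRescale (t : ℝ) (x : 𝔹) :
    (radialRescale t x : E) = (max t ‖(x : E)‖)⁻¹ • (x : E) :=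
  rfl

theorem coe_radialRescale_of_norm_le {t : ℝ} {x : 𝔹} (h : ‖(x : E)‖ ≤ t) :
    (radialRescale t x : E) = t⁻¹ • (x : E) := by
  rw [coe_radialRescale, max_eq_left h]

theorem continuousAt_radialRescale {p : ℝ × 𝔹} (hp : max p.1 ‖(p.2 : E)‖ ≠ 0) :
    ContinuousAt (fun q : ℝ × 𝔹 => radialRescale q.1 q.2) p := by
  have hx : Continuous fun q : ℝ × 𝔹 => (q.2 : E) := by fun_prop
  exact ((continuous_fst.max hx.norm).continuousAt.inv₀ hp).smul hx.continuousAt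
    |>.codRestrict _

/-- `H(f, t)`: for `f` fixing the unit sphere it is `x ↦ t • f (x / t)` on the ball of radius `t`
and the identity outside it. -/
def alexanderMap (f : 𝔹 → 𝔹) (t : I) (x : 𝔹) : 𝔹 :=
  ⟨max (t : ℝ) ‖(x : E)‖ • (f (radialRescale t x) : E), by
    have hs : 0 ≤ max (t : ℝ) ‖(x : E)‖ := le_max_of_le_left t.2.1
    rw [mem_closedBall_zero_iff, norm_smul, Real.norm_of_nonneg hs]
    exact mul_le_one₀ (max_le t.2.2 (mem_closedBall_zero_iff.1 x.2)) (norm_nonneg _)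
      (mem_closedBall_zero_iff.1 (f _).2)⟩

theorem coe_alexanderMap (f : 𝔹 → 𝔹) (t : I) (x : 𝔹) :
    (alexanderMap f t x : E) = max (t : ℝ) ‖(x : E)‖ • (f (radialRescale t x) : E) :=
  rfl

theorem norm_alexanderMap_le (f : 𝔹 → 𝔹) (t : I) (x : 𝔹) :
    ‖(alexanderMap f t x : E)‖ ≤ max (t : ℝ) ‖(x : E)‖ := by
  have hs : 0 ≤ max (t : ℝ) ‖(x : E)‖ := le_max_of_le_left t.2.1
  rw [coe_alexanderMap, norm_smul, Real.norm_of_nonneg hs]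
  exact mul_le_of_le_one_right hs (mem_closedBall_zero_iff.1 (f _).2)

theorem coe_alexanderMap_of_norm_le (f : 𝔹 → 𝔹) {t : I} {x : 𝔹} (h : ‖(x : E)‖ ≤ t) :
    (alexanderMap f t x : E) = (t : ℝ) • (f (radialRescale t x) : E) := by
  rw [coe_alexanderMap, max_eq_left h]

theorem alexanderMap_of_le_norm {f : 𝔹 → 𝔹} (hf : FixesUnitSphere f) {t : I} {x : 𝔹}
    (h : (t : ℝ) ≤ ‖(x : E)‖) : alexanderMap f t x = x := by
  ext
  rcases (norm_nonneg (x : E)).eq_or_lt with hx | hx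
  · simp [coe_alexanderMap, norm_eq_zero.mp hx.symm, h.trans hx.ge]
  · have hr : radialRescale t x = radialRescale ‖(x : E)‖ x := Subtype.ext <| by
      rw [coe_radialRescale, coe_radialRescale, max_eq_right h, max_self]
    have hr₁ : ‖(radialRescale ‖(x : E)‖ x : E)‖ = 1 := by
      rw [coe_radialRescale_of_norm_le le_rfl, norm_smul, norm_inv, norm_norm,
        inv_mul_cancel₀ hx.ne']
    rw [coe_alexanderMap, hr, hf _ hr₁, max_eq_right h, coe_radialRescale_of_norm_le le_rfl,
      smul_inv_smul₀ hx.ne']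

theorem alexanderMap_one (f : 𝔹 → 𝔹) (x : 𝔹) : alexanderMap f 1 x = f x := by
  have hx : ‖(x : E)‖ ≤ ((1 : I) : ℝ) := mem_closedBall_zero_iff.1 x.2
  have hr : radialRescale ((1 : I) : ℝ) x = x := Subtype.ext <| by
    rw [coe_radialRescale_of_norm_le hx, Set.Icc.coe_one, inv_one, one_smul]
  ext
  rw [coe_alexanderMap_of_norm_le f hx, hr, Set.Icc.coe_one, one_smul]

theorem alexanderMap_leftInverse {f g : 𝔹 → 𝔹} (hgf : Function.LeftInverse g f)
    (hf : FixesUnitSphere f) (t : I) :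
    Function.LeftInverse (alexanderMap g t) (alexanderMap f t) := by
  intro x
  rcases le_or_gt (t : ℝ) ‖(x : E)‖ with h | h
  · rw [alexanderMap_of_le_norm hf h, alexanderMap_of_le_norm (hf.of_leftInverse hgf) h]
  have ht : (t : ℝ) ≠ 0 := ((norm_nonneg _).trans_lt h).ne'
  have hy : ‖(alexanderMap f t x : E)‖ ≤ t :=
    (norm_alexanderMap_le f t x).trans_eq (max_eq_left h.le)
  -- both maps rescale by `t` on the ball of radius `t`, which they preserve
  have hr : radialRescale t (alexanderMap f t x) = f (radialRescale t x) := Subtype.ext <| by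
    rw [coe_radialRescale_of_norm_le hy, coe_alexanderMap_of_norm_le f h.le, inv_smul_smul₀ ht]
  ext
  rw [coe_alexanderMap_of_norm_le g hy, hr, hgf, coe_radialRescale_of_norm_le h.le,
    smul_inv_smul₀ ht]

theorem continuous_coe_alexanderMap [ProperSpace E] :
    Continuous fun p : C(𝔹, 𝔹) × I × 𝔹 => (alexanderMap p.1 p.2.1 p.2.2 : E) := by
  set s : C(𝔹, 𝔹) × I × 𝔹 → ℝ := fun p => max (p.2.1 : ℝ) ‖(p.2.2 : E)‖
  have hs : Continuous s := by fun_prop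
  refine continuous_iff_continuousAt.2 fun p => ?_
  by_cases hp : s p = 0
  · have h₀ : (alexanderMap p.1 p.2.1 p.2.2 : E) = 0 :=
      norm_le_zero_iff.1 ((norm_alexanderMap_le _ _ _).trans hp.le)
    rw [ContinuousAt, h₀]
    exact squeeze_zero_norm (fun q => norm_alexanderMap_le q.1 q.2.1 q.2.2)
      (hp ▸ hs.continuousAt)
  · have hr : ContinuousAt (fun q : C(𝔹, 𝔹) × I × 𝔹 => radialRescale q.2.1 q.2.2) p :=
      (continuousAt_radialRescale (p := ((p.2.1 : ℝ), p.2.2)) hp).comp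
        (f := fun q : C(𝔹, 𝔹) × I × 𝔹 => ((q.2.1 : ℝ), q.2.2)) (by fun_prop)
    exact hs.continuousAt.smul (continuous_subtype_val.continuousAt.comp
      (continuous_eval.continuousAt.comp (continuous_fst.continuousAt.prodMk hr)))

theorem continuous_alexanderMap [ProperSpace E] :
    Continuous fun p : C(𝔹, 𝔹) × I × 𝔹 => alexanderMap p.1 p.2.1 p.2.2 :=
  continuous_coe_alexanderMap.subtype_mk _

def alexanderHomeomorph [ProperSpace E] (f : 𝔹 ≃ₜ 𝔹) (hf : FixesUnitSphere f) (t : I) :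
    𝔹 ≃ₜ 𝔹 where
  toFun := alexanderMap f t
  invFun := alexanderMap f.symm t
  left_inv := alexanderMap_leftInverse f.symm_apply_apply hf t
  right_inv := alexanderMap_leftInverse f.apply_symm_apply
    (hf.of_leftInverse f.symm_apply_apply) t
  continuous_toFun := continuous_alexanderMap.comp <|
    continuous_const (y := (f : C(𝔹, 𝔹))).prodMk (continuous_const.prodMk continuous_id)
  continuous_invFun := continuous_alexanderMap.comp <|
    continuous_const (y := (f.symm : C(𝔹, 𝔹))).prodMk (continuous_const.prodMk continuous_id)

end AlexanderTrick

namespace HomeoRelBoundary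

variable {n}

theorem continuous_toContinuousMap :
    Continuous fun f : HomeoRelBoundary n => (⟨f.1, f.1.continuous⟩ : C(Dn n, Dn n)) :=
  (continuous_induced_dom.comp continuous_subtype_val).congr fun _ => rfl

def alexander (f : HomeoRelBoundary n) (t : I) : HomeoRelBoundary n :=
  ⟨alexanderHomeomorph f.1 f.2 t, fun _ hx =>
    alexanderMap_of_le_norm f.2 (t.2.2.trans_eq hx.symm)⟩

theorem continuous_alexander :
    Continuous fun p : HomeoRelBoundary n × I => p.1.alexander p.2 := by
  refine (continuous_induced_rng.2 <|
    ContinuousMap.continuous_of_continuous_uncurry _ ?_).subtype_mk _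
  exact continuous_alexanderMap.comp <| (continuous_toContinuousMap.comp
    (continuous_fst.comp continuous_fst)).prodMk
      ((continuous_snd.comp continuous_fst).prodMk continuous_snd)

theorem alexander_one (f : HomeoRelBoundary n) : f.alexander 1 = f :=
  Subtype.ext <| Homeomorph.ext <| alexanderMap_one f.1

theorem alexander_zero (f : HomeoRelBoundary n) : f.alexander 0 = homeoRelBoundaryId n :=
  Subtype.ext <| Homeomorph.ext fun _ => alexanderMap_of_le_norm f.2 (norm_nonneg _)

def alexanderContraction :
    ContinuousMap.Homotopy (ContinuousMap.const _ (homeoRelBoundaryId n))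
      (ContinuousMap.id (HomeoRelBoundary n)) where
  toFun q := q.2.alexander q.1
  continuous_toFun := continuous_alexander.comp continuous_swap
  map_zero_left := alexander_zero
  map_one_left := alexander_one

end HomeoRelBoundary

open HomeoRelBoundary in
/-- **the Alexander trick.** The group `Homeo(Dⁿ, ∂Dⁿ)` with the
compact-open topology is contractible; in fact there is an explicit contraction `H` with
`H(f,1) = f`, `H(f,0) = id`, given by `H(f,t)(x) = t·f(x/t)` for `|x| ≤ t` and
`H(f,t)(x) = x` for `t ≤ |x| ≤ 1`. -/
theorem stmt16 :
    ContractibleSpace (HomeoRelBoundary n) ∧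
      ∃ H : C(HomeoRelBoundary n × I, HomeoRelBoundary n),
        (∀ f, H (f, 1) = f) ∧
        (∀ f, H (f, 0) = homeoRelBoundaryId n) ∧
        (∀ (f : HomeoRelBoundary n) (t : I) (x : Dn n) (ht : 0 < (t : ℝ))
            (hx : ‖(x : EuclideanSpace ℝ (Fin n))‖ ≤ (t : ℝ)),
          ((H (f, t)).1 x : EuclideanSpace ℝ (Fin n)) =
            (t : ℝ) • ((f.1 ⟨(t : ℝ)⁻¹ • (x : EuclideanSpace ℝ (Fin n)), by
              have h1 : ‖((t : ℝ)⁻¹ • (x : EuclideanSpace ℝ (Fin n)))‖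
                  = (t : ℝ)⁻¹ * ‖(x : EuclideanSpace ℝ (Fin n))‖ := by
                rw [norm_smul, Real.norm_eq_abs, abs_of_nonneg (inv_nonneg.mpr ht.le)]
              rw [mem_closedBall_zero_iff, h1]
              calc (t : ℝ)⁻¹ * ‖(x : EuclideanSpace ℝ (Fin n))‖
                  ≤ (t : ℝ)⁻¹ * t := mul_le_mul_of_nonneg_left hx (inv_nonneg.mpr ht.le)
                _ = 1 := inv_mul_cancel₀ ht.ne'⟩ : Dn n) : EuclideanSpace ℝ (Fin n))) ∧
        (∀ (f : HomeoRelBoundary n) (t : I) (x : Dn n),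
          (t : ℝ) ≤ ‖(x : EuclideanSpace ℝ (Fin n))‖ → (H (f, t)).1 x = x) := by
  refine ⟨contractible_iff_id_nullhomotopic _ |>.2 ⟨_, ⟨alexanderContraction.symm⟩⟩,
    ⟨fun p => p.1.alexander p.2, continuous_alexander⟩, alexander_one, alexander_zero,
    fun f t x _ hx => ?_, fun f _ _ => alexanderMap_of_le_norm f.2⟩
  change (alexanderMap f.1 t x : EuclideanSpace ℝ (Fin n)) = _
  rw [coe_alexanderMap_of_norm_le f.1 hx]
  congr
  exact Subtype.ext (coe_radialRescale_of_norm_le hx)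

end
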